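/- Let D be the (m+n+1)\times(m+n+1) determinant whose first column has entries -q_{2i-1}^{(r+1)} (rows 1..m) and p_{(n-m)-2(i-1)+1}^{(r+1)} (rows m+1..m+n+1), and whose remaining columns j\ge 2 have entries q^{(r)}_{2i-j+1} (rows 1..m) and p^{(r)}_{(n-m)-2(i-1)+j} (rows m+1..m+n+1), arranged as in Lemma 4 of Masuda–Ohta–Kajiwara. Then D = (-1)^m R_{m,n+1}^{(r+1)}. -/

import Mathlib

open PowerSeries in
/-- `exp` of a power series `u` (intended: zero constant term), coefficientwise. -/
noncomputable def expAt (u : PowerSeries ℝ) : PowerSeries ℝ :=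
  PowerSeries.mk fun k => ∑ j ∈ Finset.range (k + 1),
    (PowerSeries.coeff k (u ^ j)) / (Nat.factorial j)

/-- The power series `(1 - η)^{-r}`. -/
noncomputable def binomSeries (r : ℝ) : PowerSeries ℝ :=
  PowerSeries.mk fun k => (∏ i ∈ Finset.range k, (r + i)) / (Nat.factorial k)

/-- Generating series `(1-η)^{-r} exp(-xη/(1-η)) = ∑ p_k^{(r)}(x) η^k`. -/
noncomputable def pSeries (r x : ℝ) : PowerSeries ℝ :=
  binomSeries r * expAt (PowerSeries.C (-x) * PowerSeries.X * (1 - PowerSeries.X)⁻¹)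

/-- `p_k^{(r)}(x)`, zero for negative `k`. -/
noncomputable def pp (r : ℝ) (k : ℤ) (x : ℝ) : ℝ :=
  if k < 0 then 0 else PowerSeries.coeff k.toNat (pSeries r x)

/-- `q_k^{(r)}(x) = p_k^{(r)}(-x)`. -/
noncomputable def qq (r : ℝ) (k : ℤ) (x : ℝ) : ℝ := pp r k (-x)

/-- The two-sided Jacobi-Trudi determinant `R_{m,n}^{(r)}(x)`: row `i` (1-based, `1 ≤ i ≤ m`)
has entries `q^{(r)}_{2i-j}(x)` and row `m+i` (`1 ≤ i ≤ n`) has entries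
`p^{(r)}_{(n-m)-2(i-1)+(j-1)}(x)`; the empty determinant is `1`. -/
noncomputable def Rdet (r : ℝ) (m n : ℕ) (x : ℝ) : ℝ :=
  Matrix.det (Matrix.of fun i j : Fin (m + n) =>
    if (i : ℕ) < m then qq r (2 * (i : ℤ) + 1 - (j : ℤ)) x
    else pp r ((n : ℤ) - (m : ℤ) - 2 * ((i : ℤ) - (m : ℤ)) + (j : ℤ)) x)

lemma binom_rec (r : ℝ) :
    binomSeries r = (1 - PowerSeries.X) * binomSeries (r + 1) := by
  ext k
  rw [sub_mul, one_mul, map_sub]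
  cases k with
  | zero => simp [binomSeries, PowerSeries.coeff_zero_X_mul]
  | succ n =>
    rw [PowerSeries.coeff_succ_X_mul]
    simp only [binomSeries, PowerSeries.coeff_mk]
    have hL : ∏ i ∈ Finset.range (n+1), (r + (i:ℝ))
        = (∏ i ∈ Finset.range n, (r + 1 + (i:ℝ))) * r := by
      rw [Finset.prod_range_succ']
      push_cast
      rw [add_zero]
      exact congrArg (· * r) (Finset.prod_congr rfl fun i _ => by ring)
    rw [hL, Finset.prod_range_succ]
    have h2 : (Nat.factorial n : ℝ) ≠ 0 := by positivity
    rw [Nat.factorial_succ]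
    push_cast
    have h1 : ((n:ℝ) + 1) ≠ 0 := by positivity
    field_simp
    ring


lemma pSeries_rec (r x : ℝ) :
    pSeries r x = (1 - PowerSeries.X) * pSeries (r + 1) x := by
  rw [pSeries, pSeries, binom_rec r, mul_assoc]

lemma pp_contig (r x : ℝ) (k : ℤ) : pp r k x = pp (r+1) k x - pp (r+1) (k-1) x := by
  rcases lt_or_ge k 0 with hk | hk
  · rw [pp, pp, pp, if_pos hk, if_pos hk, if_pos (by omega)]; ring
  obtain ⟨a, rfl⟩ := Int.eq_ofNat_of_zero_le hk
  cases a with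
  | zero =>
    rw [pp, pp, pp, if_neg (by omega), if_neg (by omega), if_pos (by norm_num)]
    rw [pSeries_rec r x, sub_mul, one_mul, map_sub]
    simp [PowerSeries.coeff_zero_X_mul]
  | succ n =>
    rw [pp, pp, pp, if_neg (by omega), if_neg (by omega), if_neg (by omega)]
    have h1 : ((n+1 : ℕ) : ℤ).toNat = n + 1 := by omega
    have h2 : (((n+1 : ℕ) : ℤ) - 1).toNat = n := by omega
    rw [h1, h2, pSeries_rec r x, sub_mul, one_mul, map_sub,
      PowerSeries.coeff_succ_X_mul]

lemma qq_contig (r x : ℝ) (k : ℤ) : qq r k x = qq (r+1) k x - qq (r+1) (k-1) x :=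
  pp_contig r (-x) k

/-- The bordered determinant of Lemma 4 of Masuda-Ohta-Kajiwara: its first column has
entries `-q_{2i-1}^{(r+1)}` (rows `1..m`) and `p_{(n-m)+1-2(i-1)}^{(r+1)}` (rows `m+1..m+n+1`),
and columns `j ≥ 2` have entries `q^{(r)}_{2i+1-j}` (rows `1..m`) and
`p^{(r)}_{(n-m)-2(i-1)+j}` (rows `m+1..m+n+1`). It equals `(-1)^m R_{m,n+1}^{(r+1)}`. -/
theorem bordered_det_eq (r x : ℝ) (m n : ℕ) :
    Matrix.det (Matrix.of fun i j : Fin (m + n + 1) =>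
      if (j : ℕ) = 0 then
        (if (i : ℕ) < m then -qq (r + 1) (2 * (i : ℤ) + 1) x
         else pp (r + 1) ((n : ℤ) - (m : ℤ) + 1 - 2 * ((i : ℤ) - (m : ℤ))) x)
      else
        (if (i : ℕ) < m then qq r (2 * (i : ℤ) + 2 - (j : ℤ)) x
         else pp r ((n : ℤ) - (m : ℤ) - 2 * ((i : ℤ) - (m : ℤ)) + (j : ℤ) + 1) x))
    = (-1 : ℝ) ^ m * Rdet (r + 1) m (n + 1) x := by
  classical
  set B : Matrix (Fin (m+n+1)) (Fin (m+n+1)) ℝ := Matrix.of fun i j =>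
    if (j : ℕ) = 0 then
      (if (i : ℕ) < m then qq (r + 1) (2 * (i : ℤ) + 1) x
       else pp (r + 1) ((n : ℤ) - (m : ℤ) + 1 - 2 * ((i : ℤ) - (m : ℤ))) x)
    else
      (if (i : ℕ) < m then -qq r (2 * (i : ℤ) + 2 - (j : ℤ)) x
       else pp r ((n : ℤ) - (m : ℤ) - 2 * ((i : ℤ) - (m : ℤ)) + (j : ℤ) + 1) x) with hB
  set A : Matrix (Fin (m+n+1)) (Fin (m+n+1)) ℝ := Matrix.of fun i j =>
    if (i : ℕ) < m then qq (r + 1) (2 * (i : ℤ) + 1 - (j : ℤ)) x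
    else pp (r + 1) ((n : ℤ) + 1 - (m : ℤ) - 2 * ((i : ℤ) - (m : ℤ)) + (j : ℤ)) x with hA
  have hAB : A.det = B.det := by
    apply Matrix.det_eq_of_forall_col_eq_smul_add_pred (fun _ => (1:ℝ))
    · intro i
      by_cases h : (i : ℕ) < m
      · simp [hA, hB, h]
      · simp only [hA, hB, Matrix.of_apply, Fin.val_zero, if_pos rfl, if_neg h]
        congr 1
        push_cast
        ring
    · intro i j
      simp only [hA, hB, Matrix.of_apply, Fin.val_succ, Fin.coe_castSucc, one_mul,
        if_neg (Nat.succ_ne_zero (j:ℕ))]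
      by_cases h : (i : ℕ) < m
      · simp only [if_pos h]
        have e1 : 2 * (i : ℤ) + 1 - ((((j:ℕ)+1 : ℕ)) : ℤ)
            = (2 * (i : ℤ) + 1 - ((j:ℕ) : ℤ)) - 1 := by push_cast; ring
        have e2 : 2 * (i : ℤ) + 2 - ((((j:ℕ)+1 : ℕ)) : ℤ)
            = 2 * (i : ℤ) + 1 - ((j:ℕ) : ℤ) := by push_cast; ring
        rw [e1, e2]
        linarith [qq_contig r x (2 * (i : ℤ) + 1 - ((j:ℕ) : ℤ))]
      · simp only [if_neg h]
        have e1 : (n : ℤ) + 1 - (m : ℤ) - 2 * ((i : ℤ) - (m : ℤ)) + ((((j:ℕ)+1 : ℕ)) : ℤ)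
            = ((n : ℤ) - (m : ℤ) - 2 * ((i : ℤ) - (m : ℤ)) + ((j:ℕ) : ℤ) + 2) := by
          push_cast; ring
        have e2 : (n : ℤ) - (m : ℤ) - 2 * ((i : ℤ) - (m : ℤ)) + ((((j:ℕ)+1 : ℕ)) : ℤ) + 1
            = ((n : ℤ) - (m : ℤ) - 2 * ((i : ℤ) - (m : ℤ)) + ((j:ℕ) : ℤ) + 2) := by
          push_cast; ring
        have e3 : (n : ℤ) + 1 - (m : ℤ) - 2 * ((i : ℤ) - (m : ℤ)) + ((j:ℕ) : ℤ)
            = ((n : ℤ) - (m : ℤ) - 2 * ((i : ℤ) - (m : ℤ)) + ((j:ℕ) : ℤ) + 2) - 1 := by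
          ring
        rw [e1, e2, e3]
        linarith [pp_contig r x ((n : ℤ) - (m : ℤ) - 2 * ((i : ℤ) - (m : ℤ)) + ((j:ℕ) : ℤ) + 2)]
  have hRA : Rdet (r + 1) m (n + 1) x = A.det := by
    rw [Rdet]
    congr 1
  set v : Fin (m+n+1) → ℝ := fun i => if (i : ℕ) < m then -1 else 1 with hv
  have hprod : (∏ i, v i) = (-1 : ℝ) ^ m := by
    rw [hv]
    rw [Finset.prod_ite, Finset.prod_const, Finset.prod_const, one_pow, mul_one]
    congr 1
    have : (Finset.univ.filter fun i : Fin (m+n+1) => (i : ℕ) < m)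
        = Finset.Iio (⟨m, by omega⟩ : Fin (m+n+1)) := by
      ext i
      simp [Fin.lt_def]
    rw [this, Fin.card_Iio]
  have hDvB : (Matrix.of fun i j : Fin (m + n + 1) =>
      if (j : ℕ) = 0 then
        (if (i : ℕ) < m then -qq (r + 1) (2 * (i : ℤ) + 1) x
         else pp (r + 1) ((n : ℤ) - (m : ℤ) + 1 - 2 * ((i : ℤ) - (m : ℤ))) x)
      else
        (if (i : ℕ) < m then qq r (2 * (i : ℤ) + 2 - (j : ℤ)) x
         else pp r ((n : ℤ) - (m : ℤ) - 2 * ((i : ℤ) - (m : ℤ)) + (j : ℤ) + 1) x))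
      = Matrix.of fun i j => v i * B i j := by
    ext i j
    by_cases h : (i : ℕ) < m <;> by_cases h0 : (j : ℕ) = 0 <;>
      simp [hB, hv, h, h0]
  rw [hDvB, Matrix.det_mul_column, hprod, ← hAB, hRA]
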